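/- arXiv:2401.12793 — 6 statements merged into one kernel-verified Lean document; each statement's English description precedes it below -/
import Mathlib

section
/- Let I be a finite family of nonempty intervals of a finite linear order such that the intersection of every nonempty subfamily of I is either empty or an interval of odd cardinality (an 'odd intersection interval set'). Let G_I be the intersection graph of I (one vertex per interval, two vertices adjacent iff the corresponding intervals intersect). Then for every connected component of G_I, the union of the intervals corresponding to the vertices of that component has odd cardinality. -/
/-!
Induct on the number of intervals of a connected family. The interval `I v` with the
smallest right endpoint `r` is simplicial: every interval meeting it contains `r`, so its
neighbours form a clique and removing `v` keeps the family connected. Moreover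
`I v ∩ ⋃ (rest)` is a single pairwise intersection `I v ∩ I j`, so
`|⋃| = |I v| + |⋃ rest| - |I v ∩ I j|` is odd minus odd plus odd.
-/

open SimpleGraph

def intersectionGraph {ι : Type*} {α : Type*} (I : ι → Set α) : SimpleGraph ι where
  Adj i j := i ≠ j ∧ (I i ∩ I j).Nonempty
  symm := by
    constructor
    rintro i j ⟨hne, x, hx₁, hx₂⟩
    exact ⟨hne.symm, x, hx₂, hx₁⟩
  loopless := ⟨fun i h => h.1 rfl⟩

namespace SimpleGraph

variable {V : Type*} [DecidableEq V] {G : SimpleGraph V}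

/-- Connectedness of the subgraph induced on `S`, phrased through cuts. -/
def IsCutConnected (G : SimpleGraph V) (S : Finset V) : Prop :=
  ∀ A ⊆ S, A.Nonempty → (S \ A).Nonempty → ∃ a ∈ A, ∃ b ∈ S \ A, G.Adj a b

theorem ConnectedComponent.isCutConnected_supp [Finite V] (c : G.ConnectedComponent) :
    G.IsCutConnected c.supp.toFinite.toFinset := by
  intro A hA ⟨a, ha⟩ ⟨b, hb⟩
  rw [Finset.mem_sdiff, Set.Finite.mem_toFinset, ConnectedComponent.mem_supp_iff] at hb
  have hac : G.connectedComponentMk a = c := by simpa using hA ha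
  obtain ⟨p⟩ := ConnectedComponent.exact (hac.trans hb.1.symm)
  obtain ⟨d, -, hd₁, hd₂⟩ := p.exists_boundary_dart (A : Set V) ha (by simpa using hb.2)
  have hd₁c : G.connectedComponentMk d.fst = c := by simpa using hA hd₁
  refine ⟨d.fst, hd₁, d.snd, Finset.mem_sdiff.2 ⟨?_, hd₂⟩, d.adj⟩
  simpa [← ConnectedComponent.connectedComponentMk_eq_of_adj d.adj] using hd₁c

variable {S A : Finset V} {v : V}

theorem IsCutConnected.exists_adj_of_subset_erase (hS : G.IsCutConnected S) (hv : v ∈ S)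
    (hA : A ⊆ S.erase v) (hAne : A.Nonempty)
    (hisolated : ∀ a ∈ A, ∀ b ∈ S.erase v \ A, ¬G.Adj a b) : ∃ a ∈ A, G.Adj a v := by
  have hvA : v ∉ A := fun h => Finset.notMem_erase v S (hA h)
  obtain ⟨a, ha, b, hb, hab⟩ :=
    hS A (hA.trans (Finset.erase_subset v S)) hAne ⟨v, Finset.mem_sdiff.2 ⟨hv, hvA⟩⟩
  rw [Finset.mem_sdiff] at hb
  by_cases hbv : b = v
  · exact ⟨a, ha, hbv ▸ hab⟩
  · exact absurd hab (hisolated a ha b (Finset.mem_sdiff.2 ⟨Finset.mem_erase.2 ⟨hbv, hb.1⟩, hb.2⟩))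

theorem IsCutConnected.erase (hS : G.IsCutConnected S) (hv : v ∈ S)
    (hsimplicial : ∀ a ∈ S.erase v, ∀ b ∈ S.erase v, G.Adj a v → G.Adj b v → a ≠ b → G.Adj a b) :
    G.IsCutConnected (S.erase v) := by
  intro A hA hAne hBne
  by_contra! hisolated
  obtain ⟨a, ha, hav⟩ := hS.exists_adj_of_subset_erase hv hA hAne hisolated
  obtain ⟨b, hb, hbv⟩ := hS.exists_adj_of_subset_erase hv Finset.sdiff_subset hBne <| by
    rw [Finset.sdiff_sdiff_eq_self hA]
    exact fun b hb a ha hba => hisolated a ha b hb hba.symm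
  have hab : a ≠ b := fun h => (Finset.mem_sdiff.1 hb).2 (h ▸ ha)
  exact hisolated a ha b hb (hsimplicial a (hA ha) b (Finset.sdiff_subset hb) hav hbv hab)

end SimpleGraph

theorem Set.odd_ncard_union {α : Type*} {s t : Set α} (hs : Odd s.ncard) (ht : Odd t.ncard)
    (hst : Odd (s ∩ t).ncard) : Odd (s ∪ t).ncard := by
  have hsum := Set.ncard_union_add_ncard_inter s t
    (Set.finite_of_ncard_ne_zero hs.pos.ne') (Set.finite_of_ncard_ne_zero ht.pos.ne')
  have heven : Even ((s ∪ t).ncard + (s ∩ t).ncard) := hsum ▸ hs.add_odd ht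
  rw [Nat.even_add] at heven
  exact Nat.not_even_iff_odd.1 fun h => Nat.not_even_iff_odd.2 hst (heven.1 h)

section Intervals

variable {α ι : Type*} [Finite α] [LinearOrder α] {I : ι → Set α}

theorem exists_upperBound_mem_of_inter_nonempty (hne : ∀ i, (I i).Nonempty)
    (hInt : ∀ i, (I i).OrdConnected) {S : Finset ι} (hS : S.Nonempty) :
    ∃ v ∈ S, ∃ r ∈ upperBounds (I v), ∀ j ∈ S, (I v ∩ I j).Nonempty → r ∈ I j := by
  choose R hRmem hRmax using fun i => Set.exists_max_image (I i) id (Set.toFinite _) (hne i)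
  obtain ⟨v, hvS, hvmin⟩ := S.exists_min_image R hS
  refine ⟨v, hvS, R v, hRmax v, fun j hj ⟨x, hxv, hxj⟩ => ?_⟩
  exact (hInt j).out hxj (hRmem j) ⟨hRmax v x hxv, hvmin j hj⟩

/-- The sets `s ∩ I j` are final segments of `s`, so their union is the one containing its
least point. -/
theorem exists_inter_biUnion_eq_inter (hInt : ∀ i, (I i).OrdConnected) {T : Finset ι}
    {s : Set α} {r : α} (hr : r ∈ upperBounds s) (hmem : ∀ j ∈ T, (s ∩ I j).Nonempty → r ∈ I j)
    (hmeet : (s ∩ ⋃ j ∈ T, I j).Nonempty) : ∃ j ∈ T, s ∩ ⋃ j ∈ T, I j = s ∩ I j := by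
  obtain ⟨x₀, ⟨hx₀s, hx₀U⟩, hx₀min⟩ := Set.exists_min_image _ id (Set.toFinite _) hmeet
  obtain ⟨j₀, hj₀, hx₀j₀⟩ := Set.mem_iUnion₂.1 hx₀U
  have hrj₀ : r ∈ I j₀ := hmem j₀ hj₀ ⟨x₀, hx₀s, hx₀j₀⟩
  refine ⟨j₀, hj₀, Set.Subset.antisymm (fun x hx => ⟨hx.1, ?_⟩) ?_⟩
  · exact (hInt j₀).out hx₀j₀ hrj₀ ⟨hx₀min x hx, hr hx.1⟩
  · exact Set.inter_subset_inter_right s (Set.subset_biUnion_of_mem hj₀)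

theorem odd_ncard_biUnion_of_isCutConnected [DecidableEq ι] (hne : ∀ i, (I i).Nonempty)
    (hInt : ∀ i, (I i).OrdConnected)
    (hodd : ∀ i j, (I i ∩ I j).Nonempty → Odd (I i ∩ I j).ncard)
    (S : Finset ι) (hS : S.Nonempty) (hconn : (intersectionGraph I).IsCutConnected S) :
    Odd (⋃ i ∈ S, I i).ncard := by
  induction S using Finset.strongInduction with
  | H S ih =>
  obtain ⟨v, hvS, r, hr, hrmem⟩ := exists_upperBound_mem_of_inter_nonempty hne hInt hS
  have hIv : Odd (I v).ncard := by simpa using hodd v v (by simpa using hne v)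
  rcases (S.erase v).eq_empty_or_nonempty with hS' | hS'
  · obtain rfl : S = {v} := ((S.erase_eq_empty_iff v).1 hS').resolve_left hS.ne_empty
    simpa using hIv
  have hconn' : (intersectionGraph I).IsCutConnected (S.erase v) := by
    refine hconn.erase hvS fun a ha b hb ⟨_, hav⟩ ⟨_, hbv⟩ hab => ⟨hab, r, ?_, ?_⟩
    · exact hrmem a (Finset.mem_of_mem_erase ha) (by rwa [Set.inter_comm])
    · exact hrmem b (Finset.mem_of_mem_erase hb) (by rwa [Set.inter_comm])
  obtain ⟨j, hj, -, x, hxj, hxv⟩ :=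
    hconn.exists_adj_of_subset_erase hvS subset_rfl hS' (by simp)
  obtain ⟨k, -, hinter⟩ := exists_inter_biUnion_eq_inter hInt hr
    (fun j hj => hrmem j (Finset.mem_of_mem_erase hj)) ⟨x, hxv, Set.mem_biUnion hj hxj⟩
  rw [← Finset.insert_erase hvS, Finset.set_biUnion_insert]
  refine Set.odd_ncard_union hIv (ih _ (Finset.erase_ssubset hvS) hS' hconn') ?_
  rw [hinter]
  exact hodd v k (hinter ▸ ⟨x, hxv, Set.mem_biUnion hj hxj⟩)

end Intervals

/-- Let `I` be a finite family of nonempty intervals of a finite linear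
order such that the intersection of every nonempty subfamily is either empty or an
interval of odd cardinality.  Then, for every connected component of the intersection
graph of `I`, the union of the intervals corresponding to the vertices of that
component has odd cardinality. -/
theorem odd_union_of_oddIntersectionIntervalSet
    {α : Type*} [Fintype α] [LinearOrder α] {ι : Type*} [Fintype ι]
    (I : ι → Set α)
    (hne : ∀ i, (I i).Nonempty)
    (hInt : ∀ i, (I i).OrdConnected)
    (hodd : ∀ t : Finset ι, t.Nonempty →
      (⋂ i ∈ t, I i) = ∅ ∨ Odd (⋂ i ∈ t, I i).ncard) :
    ∀ c : (intersectionGraph I).ConnectedComponent,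
      Odd (⋃ i ∈ {i : ι | (intersectionGraph I).connectedComponentMk i = c}, I i).ncard := by
  classical
  intro c
  have hpair : ∀ i j, (I i ∩ I j).Nonempty → Odd (I i ∩ I j).ncard := fun i j h => by
    have := hodd {i, j} (Finset.insert_nonempty _ _)
    rw [Finset.set_biInter_insert, Finset.set_biInter_singleton] at this
    exact this.resolve_left h.ne_empty
  simpa using odd_ncard_biUnion_of_isCutConnected hne hInt hpair c.supp.toFinite.toFinset
    (by simpa using c.nonempty_supp) c.isCutConnected_supp
end

section
/- Let G be a simple graph and F a set of edges of G. If the contracted graph G/F contains a hole on h vertices, then G contains a hole on at least h vertices. -/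
open SimpleGraph

universe u

variable {V : Type u}

/-- The clique number of a graph, as an extended natural number:
the supremum of the cardinalities of its (finite) cliques. -/
noncomputable def cliqueNumber (G : SimpleGraph V) : ℕ∞ :=
  ⨆ (t : Finset V) (_ : G.IsClique (t : Set V)), (t.card : ℕ∞)

/-- A graph is perfect if every induced subgraph has chromatic number equal
to its clique number. -/
def IsPerfect (G : SimpleGraph V) : Prop :=
  ∀ s : Set V, (G.induce s).chromaticNumber = cliqueNumber (G.induce s)

/-- The contraction `G/F` of a set `F` of edges: vertices are the connected components
of the spanning subgraph `(V, F)`, two distinct components being adjacent iff `G` has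
an edge between them. -/
def contractEdges (G : SimpleGraph V) (F : Set (Sym2 V)) :
    SimpleGraph (SimpleGraph.fromEdgeSet F).ConnectedComponent where
  Adj c d := c ≠ d ∧ ∃ x y : V,
      (SimpleGraph.fromEdgeSet F).connectedComponentMk x = c ∧
      (SimpleGraph.fromEdgeSet F).connectedComponentMk y = d ∧ G.Adj x y
  symm := by
    constructor
    rintro c d ⟨hne, x, y, hx, hy, hxy⟩
    exact ⟨hne.symm, y, x, hy, hx, hxy.symm⟩
  loopless := ⟨fun c h => h.1 rfl⟩

/-- A graph is contraction perfect if the contraction of any set of its edges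
yields a perfect graph. -/
def IsContractionPerfect (G : SimpleGraph V) : Prop :=
  ∀ F : Set (Sym2 V), F ⊆ G.edgeSet → IsPerfect (contractEdges G F)

/-- `G` contains a hole (induced cycle, `n ≥ 4`) on `n` vertices. -/
def HasHole (G : SimpleGraph V) (n : ℕ) : Prop :=
  4 ≤ n ∧ ∃ s : Set V, Nonempty (G.induce s ≃g cycleGraph n)

/-- `G` contains an antihole (induced complement of a cycle, `n ≥ 4`) on `n` vertices. -/
def HasAntihole (G : SimpleGraph V) (n : ℕ) : Prop :=
  4 ≤ n ∧ ∃ s : Set V, Nonempty ((G.induce s)ᶜ ≃g cycleGraph n)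

/-- `u`, `v` and `w 0, …, w (p-1)` (thought of as `w_1, …, w_p`) form an expanded antihole
in `G`: `uv` is an edge, the `w i` are distinct vertices different from `u` and `v`
inducing an antipath in this order, `u` is adjacent exactly to `w_2, …, w_{p-2}` among them,
and `v` is adjacent exactly to `w_3, …, w_{p-1}` among them. -/
def IsExpandedAntihole (G : SimpleGraph V) (u v : V) (p : ℕ) (w : Fin p → V) : Prop :=
  6 ≤ p ∧ Even p ∧ G.Adj u v ∧ Function.Injective w ∧
  (∀ i, w i ≠ u) ∧ (∀ i, w i ≠ v) ∧
  (∀ i j, G.Adj (w i) (w j) ↔ (i ≠ j ∧ (i : ℕ) + 1 ≠ (j : ℕ) ∧ (j : ℕ) + 1 ≠ (i : ℕ))) ∧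
  (∀ i, G.Adj u (w i) ↔ (1 ≤ (i : ℕ) ∧ (i : ℕ) ≤ p - 3)) ∧
  (∀ i, G.Adj v (w i) ↔ (2 ≤ (i : ℕ) ∧ (i : ℕ) ≤ p - 2))

/-- The contraction `G/uv` of a single edge `uv`: delete `u` and `v` and add a new
vertex (here `none`) adjacent to every vertex of `N(u) ∪ N(v)`. -/
def contractOne (G : SimpleGraph V) (u v : V) :
    SimpleGraph (Option {x : V // x ≠ u ∧ x ≠ v}) where
  Adj a b :=
    match a, b with
    | some x, some y => G.Adj x.1 y.1
    | some x, none => G.Adj x.1 u ∨ G.Adj x.1 v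
    | none, some y => G.Adj u y.1 ∨ G.Adj v y.1
    | none, none => False
  symm := by
    constructor
    rintro (_ | x) (_ | y) h
    · exact h
    · exact h.imp (fun h' => h'.symm) (fun h' => h'.symm)
    · exact h.imp (fun h' => h'.symm) (fun h' => h'.symm)
    · exact h.symm
  loopless := by
    constructor
    rintro (_ | x) h
    · exact h
    · exact G.loopless.irrefl _ h

/-- The utter graph of `G`, on vertex set `V(G) ∪ E(G)`. -/
def utterGraph (G : SimpleGraph V) : SimpleGraph (V ⊕ G.edgeSet) where
  Adj a b :=
    match a, b with
    | Sum.inl x, Sum.inl y => G.Adj x y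
    | Sum.inl x, Sum.inr e => x ∈ (e : Sym2 V) ∨ ∃ y ∈ (e : Sym2 V), G.Adj x y
    | Sum.inr e, Sum.inl x => x ∈ (e : Sym2 V) ∨ ∃ y ∈ (e : Sym2 V), G.Adj x y
    | Sum.inr e, Sum.inr f => e ≠ f ∧
        ((∃ x, x ∈ (e : Sym2 V) ∧ x ∈ (f : Sym2 V)) ∨
          ∃ x ∈ (e : Sym2 V), ∃ y ∈ (f : Sym2 V), G.Adj x y)
  symm := by
    constructor
    rintro (x | e) (y | f) h
    · exact h.symm
    · exact h
    · exact h
    · exact ⟨h.1.symm, h.2.imp (fun ⟨x, hx⟩ => ⟨x, hx.2, hx.1⟩)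
        (fun ⟨x, hx, y, hy, hxy⟩ => ⟨y, hy, x, hx, hxy.symm⟩)⟩
  loopless := by
    constructor
    rintro (x | e) h
    · exact G.loopless.irrefl _ h
    · exact h.1 rfl

/-- A stable (independent) set: a set of pairwise nonadjacent vertices. -/
def IsStableSet (G : SimpleGraph V) (s : Set V) : Prop :=
  ∀ x ∈ s, ∀ y ∈ s, ¬G.Adj x y

/-- A co-2-plex: a set of vertices inducing a subgraph of maximum degree at most one. -/
def IsCo2Plex (G : SimpleGraph V) (S : Set V) : Prop :=
  ∀ x ∈ S, ∀ y ∈ S, ∀ z ∈ S, G.Adj x y → G.Adj x z → y = z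

/-- The graph obtained from `G` by adding a true twin (`none`) of the vertex `v`. -/
def addTrueTwin (G : SimpleGraph V) (v : V) : SimpleGraph (Option V) where
  Adj a b :=
    match a, b with
    | some x, some y => G.Adj x y
    | some x, none => x = v ∨ G.Adj x v
    | none, some y => y = v ∨ G.Adj y v
    | none, none => False
  symm := by constructor; rintro (_ | x) (_ | y) h <;> first | exact h | exact h.symm
  loopless := by
    constructor
    rintro (_ | x) h
    · exact h
    · exact G.loopless.irrefl _ h

/-- The graph obtained from `G` by adding a false twin (`none`) of the vertex `v`. -/
def addFalseTwin (G : SimpleGraph V) (v : V) : SimpleGraph (Option V) where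
  Adj a b :=
    match a, b with
    | some x, some y => G.Adj x y
    | some x, none => G.Adj x v
    | none, some y => G.Adj y v
    | none, none => False
  symm := by constructor; rintro (_ | x) (_ | y) h <;> first | exact h | exact h.symm
  loopless := by
    constructor
    rintro (_ | x) h
    · exact h
    · exact G.loopless.irrefl _ h

/-!
Lift the hole `c₀, …, c_{h-1}` of `G/F` to `G`: inside each component `cᵢ` pick a path of `G`
whose last vertex is adjacent to the first vertex of the path picked in `cᵢ₊₁`. Concatenated,
these paths form a closed walk with at least `h` vertices. Take one of minimal length. There are
no edges between non-consecutive components, because the `cᵢ` induce a hole of `G/F`. Any other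
chord, whether inside one component or between consecutive components, would give a shorter
walk. So the minimal walk is an induced cycle of `G`.
-/

theorem Fin.add_one_ne_self {n : ℕ} [NeZero n] (hn : 2 ≤ n) (i : Fin n) : i + 1 ≠ i :=
  fun h => by have := Fin.one_eq_zero_iff.mp (add_eq_left.mp h); omega

theorem Fin.val_add_one_eq_mod {k : ℕ} [NeZero k] (a : Fin k) :
    ((a + 1 : Fin k) : ℕ) = ((a : ℕ) + 1) % k := by
  rw [Fin.val_add, Fin.val_one', Nat.add_mod_mod]

section Blocks

variable {n : ℕ} (ℓ : Fin n → ℕ)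

def blockOffset (m : ℕ) : ℕ :=
  ∑ j ∈ Finset.range m, if h : j < n then ℓ ⟨j, h⟩ + 1 else 0

theorem blockOffset_add_one (i : Fin n) :
    blockOffset ℓ (i + 1) = blockOffset ℓ i + (ℓ i + 1) := by
  simp [blockOffset, Finset.sum_range_succ]

theorem blockOffset_mono : Monotone (blockOffset ℓ) := fun _ _ h =>
  Finset.sum_le_sum_of_subset (Finset.range_mono h)

theorem blockOffset_self : blockOffset ℓ n = ∑ i, (ℓ i + 1) := by
  rw [blockOffset, Finset.sum_fin_eq_sum_range]

theorem finSigmaFinEquiv_val (x : (i : Fin n) × Fin (ℓ i + 1)) :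
    (finSigmaFinEquiv x : ℕ) = blockOffset ℓ x.1 + x.2 := by
  rw [finSigmaFinEquiv_apply, Finset.sum_fin_eq_sum_range, blockOffset]
  congr 1
  refine Finset.sum_congr rfl fun j hj => ?_
  have hj : j < x.1 := Finset.mem_range.mp hj
  simp [hj, x.1.isLt.trans' hj]

variable [NeZero n]

def blockSucc (x : (i : Fin n) × Fin (ℓ i + 1)) : (i : Fin n) × Fin (ℓ i + 1) :=
  if h : (x.2 : ℕ) < ℓ x.1 then ⟨x.1, ⟨x.2 + 1, by omega⟩⟩ else ⟨x.1 + 1, 0⟩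

instance : NeZero (∑ i : Fin n, (ℓ i + 1)) :=
  ⟨(Finset.sum_pos (fun _ _ => Nat.succ_pos _) Finset.univ_nonempty).ne'⟩

variable {ℓ} in
theorem blockSucc_of_lt {i : Fin n} {s : Fin (ℓ i + 1)} (h : (s : ℕ) < ℓ i) :
    blockSucc ℓ ⟨i, s⟩ = ⟨i, ⟨s + 1, by omega⟩⟩ :=
  dif_pos h

variable {ℓ} in
theorem blockSucc_of_eq {i : Fin n} {s : Fin (ℓ i + 1)} (h : (s : ℕ) = ℓ i) :
    blockSucc ℓ ⟨i, s⟩ = ⟨i + 1, 0⟩ :=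
  dif_neg h.not_lt

theorem finSigmaFinEquiv_blockSucc (x : (i : Fin n) × Fin (ℓ i + 1)) :
    finSigmaFinEquiv (blockSucc ℓ x) = finSigmaFinEquiv x + 1 := by
  obtain ⟨i, t⟩ := x
  have hi := blockOffset_add_one ℓ i
  have hin := blockOffset_mono ℓ (show (i : ℕ) + 1 ≤ n from i.isLt)
  by_cases ht : (t : ℕ) < ℓ i
  · rw [blockSucc_of_lt ht]
    apply Fin.ext
    rw [Fin.val_add_one_eq_mod, finSigmaFinEquiv_val, finSigmaFinEquiv_val, ← blockOffset_self,
      Nat.mod_eq_of_lt (by simp only; omega)]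
    rfl
  have ht' : (t : ℕ) = ℓ i := by omega
  rw [blockSucc_of_eq ht']
  apply Fin.ext
  rw [Fin.val_add_one_eq_mod, finSigmaFinEquiv_val, finSigmaFinEquiv_val, ← blockOffset_self]
  simp only [Fin.val_zero, add_zero]
  by_cases hlast : (i : ℕ) + 1 < n
  · have hi' : ((i + 1 : Fin n) : ℕ) = i + 1 := by
      rw [Fin.val_add_one_eq_mod, Nat.mod_eq_of_lt hlast]
    have : blockOffset ℓ (i + 1 + 1) = blockOffset ℓ (i + 1) + (ℓ ⟨i + 1, hlast⟩ + 1) :=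
      blockOffset_add_one ℓ ⟨i + 1, hlast⟩
    have := blockOffset_mono ℓ (show (i : ℕ) + 1 + 1 ≤ n from hlast)
    rw [hi', Nat.mod_eq_of_lt (by omega)]
    omega
  · have hn : (i : ℕ) + 1 = n := by omega
    have hi' : ((i + 1 : Fin n) : ℕ) = 0 := by rw [Fin.val_add_one_eq_mod, hn, Nat.mod_self]
    rw [hi', add_assoc, ht', ← hi, hn, Nat.mod_self]
    rfl

end Blocks

namespace SimpleGraph

theorem cycleGraph_adj_iff_eq_add_one {k : ℕ} [NeZero k] (hk : 2 ≤ k) {a b : Fin k} :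
    (cycleGraph k).Adj a b ↔ b = a + 1 ∨ a = b + 1 := by
  obtain ⟨m, rfl⟩ : ∃ m, k = m + 2 := ⟨k - 2, by omega⟩
  rw [cycleGraph_adj, sub_eq_iff_eq_add, sub_eq_iff_eq_add, add_comm b, add_comm a, or_comm]

theorem isIndContained_cycleGraph_of_succ {G : SimpleGraph V} {T : Type*} {k : ℕ} [NeZero k]
    (hk : 2 ≤ k) (e : T ≃ Fin k) (σ : T → T) (he : ∀ x, e (σ x) = e x + 1) (v : T → V)
    (hv : Function.Injective v) (hadj : ∀ x y, G.Adj (v x) (v y) ↔ y = σ x ∨ x = σ y) :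
    cycleGraph k ⊴ G := by
  have hσ : ∀ a b, e.symm b = σ (e.symm a) ↔ b = a + 1 := fun a b => by
    rw [Equiv.symm_apply_eq, he, Equiv.apply_symm_apply]
  exact ⟨{ toFun := v ∘ e.symm
           inj' := hv.comp e.symm.injective
           map_rel_iff' := fun {a b} => by
             simp only [Function.Embedding.coeFn_mk, Function.comp_apply, hadj, hσ,
               cycleGraph_adj_iff_eq_add_one hk] }⟩

-- Only the values `P 0, …, P ℓ` matter.
structure IsPathSeq (G : SimpleGraph V) (S : Set V) (ℓ : ℕ) (P : ℕ → V) : Prop where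
  mapsTo : Set.MapsTo P (Set.Iic ℓ) S
  injOn : Set.InjOn P (Set.Iic ℓ)
  adj : ∀ t < ℓ, G.Adj (P t) (P (t + 1))

namespace IsPathSeq

variable {G : SimpleGraph V} {S : Set V} {ℓ : ℕ} {P : ℕ → V}

theorem take (hP : G.IsPathSeq S ℓ P) {s : ℕ} (hs : s ≤ ℓ) : G.IsPathSeq S s P where
  mapsTo := hP.mapsTo.mono_left (Set.Iic_subset_Iic.mpr hs)
  injOn := hP.injOn.mono (Set.Iic_subset_Iic.mpr hs)
  adj t ht := hP.adj t (by omega)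

theorem drop (hP : G.IsPathSeq S ℓ P) {t : ℕ} (ht : t ≤ ℓ) :
    G.IsPathSeq S (ℓ - t) (fun m => P (m + t)) := by
  refine ⟨fun m hm => hP.mapsTo (by simp at hm ⊢; omega), ?_, ?_⟩
  · intro a ha b hb hab
    have := hP.injOn (by simp at ha ⊢; omega) (by simp at hb ⊢; omega) hab
    omega
  · intro m hm
    simpa [Nat.add_right_comm] using hP.adj (m + t) (by omega)

theorem shortcut (hP : G.IsPathSeq S ℓ P) {s d : ℕ} (hℓ : s + d + 1 ≤ ℓ)
    (hadj : G.Adj (P s) (P (s + d + 1))) :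
    G.IsPathSeq S (ℓ - d) (fun m => if m ≤ s then P m else P (m + d)) := by
  refine ⟨fun m hm => ?_, fun a ha b hb hab => ?_, fun m hm => ?_⟩
  · simp only [Set.mem_Iic] at hm
    split_ifs <;> exact hP.mapsTo (by simp; omega)
  · simp only [Set.mem_Iic] at ha hb
    split_ifs at hab <;>
      have := hP.injOn (by simp; omega) (by simp; omega) hab <;> omega
  · rcases lt_trichotomy m s with h | rfl | h
    · simpa [h.le, Nat.succ_le_of_lt h] using hP.adj m (by omega)
    · simpa [Nat.add_right_comm] using hadj
    · simpa [h.not_ge, show ¬ m + 1 ≤ s by omega, Nat.add_right_comm] using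
        hP.adj (m + d) (by omega)

end IsPathSeq

theorem exists_isPathSeq_of_connectedComponentMk_eq {G H : SimpleGraph V} (hHG : H ≤ G)
    {C : H.ConnectedComponent} {u v : V} (hu : H.connectedComponentMk u = C)
    (hv : H.connectedComponentMk v = C) :
    ∃ ℓ P, G.IsPathSeq C.supp ℓ P ∧ P 0 = u ∧ P ℓ = v := by
  classical
  obtain ⟨w⟩ := ConnectedComponent.exact (hu.trans hv.symm)
  let p := w.toPath
  refine ⟨p.1.length, p.1.getVert, ⟨fun t _ => ?_, p.2.getVert_injOn, fun t ht => ?_⟩,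
    p.1.getVert_zero, p.1.getVert_length⟩
  · rw [ConnectedComponent.mem_supp_iff, ← hu]
    exact (ConnectedComponent.sound ⟨p.1.take t⟩).symm
  · exact hHG (p.1.adj_getVert_succ ht)

structure CycleLift (G : SimpleGraph V) {n : ℕ} [NeZero n] (S : Fin n → Set V) (ℓ : Fin n → ℕ)
    (Q : Fin n → ℕ → V) : Prop where
  isPathSeq : ∀ i, G.IsPathSeq (S i) (ℓ i) (Q i)
  adj : ∀ i, G.Adj (Q i (ℓ i)) (Q (i + 1) 0)

namespace CycleLift

variable {G : SimpleGraph V} {n : ℕ} [NeZero n] {S : Fin n → Set V} {ℓ : Fin n → ℕ}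
  {Q : Fin n → ℕ → V}

theorem exists_sum_lt_of_replace (L : G.CycleLift S ℓ Q) (hn : 2 ≤ n) (i : Fin n) {a b : ℕ}
    {P R : ℕ → V} (hP : G.IsPathSeq (S i) a P) (hR : G.IsPathSeq (S (i + 1)) b R)
    (hstart : P 0 = Q i 0) (hadj : G.Adj (P a) (R 0)) (hend : R b = Q (i + 1) (ℓ (i + 1)))
    (ha : a ≤ ℓ i) (hb : b ≤ ℓ (i + 1)) (hab : a + b < ℓ i + ℓ (i + 1)) :
    ∃ ℓ' Q', G.CycleLift S ℓ' Q' ∧ ∑ j, ℓ' j < ∑ j, ℓ j := by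
  classical
  have hi : i + 1 ≠ i := Fin.add_one_ne_self hn i
  set ℓ' := Function.update (Function.update ℓ i a) (i + 1) b
  set Q' := Function.update (Function.update Q i P) (i + 1) R
  have hℓ'i : ℓ' i = a := by simp [ℓ', hi.symm]
  have hQ'i : Q' i = P := by simp [Q', hi.symm]
  have hℓ' : ∀ j, j ≠ i → j ≠ i + 1 → ℓ' j = ℓ j := by intro j h₁ h₂; simp [ℓ', h₁, h₂]
  have hQ' : ∀ j, j ≠ i → j ≠ i + 1 → Q' j = Q j := by intro j h₁ h₂; simp [Q', h₁, h₂]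
  have hfirst : ∀ j, j ≠ i + 1 → Q' j 0 = Q j 0 := by
    intro j hj
    by_cases h : j = i
    · subst h; rw [hQ'i, hstart]
    · rw [hQ' j h hj]
  have hlast : ∀ j, j ≠ i → Q' j (ℓ' j) = Q j (ℓ j) := by
    intro j hj
    by_cases h : j = i + 1
    · subst h; simpa [ℓ', Q'] using hend
    · rw [hQ' j hj h, hℓ' j hj h]
  refine ⟨ℓ', Q', ⟨fun j => ?_, fun j => ?_⟩, ?_⟩
  · by_cases h₂ : j = i + 1
    · subst h₂; simpa [ℓ', Q'] using hR
    by_cases h₁ : j = i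
    · subst h₁; rw [hℓ'i, hQ'i]; exact hP
    · rw [hℓ' j h₁ h₂, hQ' j h₁ h₂]; exact L.isPathSeq j
  · by_cases h : j = i
    · subst h; simpa [hℓ'i, hQ'i, Q'] using hadj
    · rw [hlast j h, hfirst (j + 1) (fun h' => h (add_right_cancel h'))]
      exact L.adj j
  · apply Finset.sum_lt_sum
    · intro j _
      by_cases h₂ : j = i + 1
      · subst h₂; simpa [ℓ'] using hb
      by_cases h₁ : j = i
      · subst h₁; rw [hℓ'i]; exact ha
      · rw [hℓ' j h₁ h₂]
    · by_cases ha' : a < ℓ i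
      · exact ⟨i, Finset.mem_univ _, by rw [hℓ'i]; exact ha'⟩
      · exact ⟨i + 1, Finset.mem_univ _, by simp [ℓ']; omega⟩

theorem exists_sum_lt_of_adj_same (L : G.CycleLift S ℓ Q) (hn : 2 ≤ n) (i : Fin n) {s t : ℕ}
    (hst : s + 1 < t) (ht : t ≤ ℓ i) (hadj : G.Adj (Q i s) (Q i t)) :
    ∃ ℓ' Q', G.CycleLift S ℓ' Q' ∧ ∑ j, ℓ' j < ∑ j, ℓ j := by
  obtain ⟨d, rfl⟩ : ∃ d, t = s + d + 1 := ⟨t - s - 1, by omega⟩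
  refine L.exists_sum_lt_of_replace hn i ((L.isPathSeq i).shortcut ht hadj)
    (L.isPathSeq (i + 1)) (by simp) ?_ rfl (by omega) le_rfl (by omega)
  simpa [show ¬ ℓ i - d ≤ s by omega, show ℓ i - d + d = ℓ i by omega] using L.adj i

theorem exists_sum_lt_of_adj_succ (L : G.CycleLift S ℓ Q) (hn : 2 ≤ n) (i : Fin n) {s t : ℕ}
    (hs : s ≤ ℓ i) (ht : t ≤ ℓ (i + 1)) (hadj : G.Adj (Q i s) (Q (i + 1) t))
    (hst : ¬(s = ℓ i ∧ t = 0)) :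
    ∃ ℓ' Q', G.CycleLift S ℓ' Q' ∧ ∑ j, ℓ' j < ∑ j, ℓ j :=
  L.exists_sum_lt_of_replace hn i ((L.isPathSeq i).take hs) ((L.isPathSeq (i + 1)).drop ht) rfl
    (by simpa using hadj) (by simp [Nat.sub_add_cancel ht]) hs (Nat.sub_le _ _) (by omega)

theorem injective (L : G.CycleLift S ℓ Q) (hS : Pairwise fun i j => Disjoint (S i) (S j)) :
    Function.Injective fun x : (i : Fin n) × Fin (ℓ i + 1) => Q x.1 x.2 := by
  rintro ⟨i, s⟩ ⟨j, t⟩ (h : Q i s = Q j t)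
  obtain rfl : i = j := by
    by_contra hij
    exact Set.disjoint_left.mp (hS hij) ((L.isPathSeq i).mapsTo (Nat.lt_succ_iff.mp s.isLt))
      (h ▸ (L.isPathSeq j).mapsTo (Nat.lt_succ_iff.mp t.isLt))
  exact congrArg (Sigma.mk i) (Fin.ext ((L.isPathSeq i).injOn (Nat.lt_succ_iff.mp s.isLt)
    (Nat.lt_succ_iff.mp t.isLt) h))

theorem adj_blockSucc (L : G.CycleLift S ℓ Q) (x : (i : Fin n) × Fin (ℓ i + 1)) :
    G.Adj (Q x.1 x.2) (Q (blockSucc ℓ x).1 (blockSucc ℓ x).2) := by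
  obtain ⟨i, s⟩ := x
  by_cases h : (s : ℕ) < ℓ i
  · rw [blockSucc_of_lt h]
    exact (L.isPathSeq i).adj s h
  · rw [blockSucc_of_eq (by omega)]
    simpa [show (s : ℕ) = ℓ i by omega] using L.adj i

theorem adj_iff_blockSucc (L : G.CycleLift S ℓ Q) (hn : 2 ≤ n)
    (hnear : ∀ i j, ∀ x ∈ S i, ∀ y ∈ S j, G.Adj x y → i = j ∨ (cycleGraph n).Adj i j)
    (hsame : ∀ i s t, s + 1 < t → t ≤ ℓ i → ¬G.Adj (Q i s) (Q i t))
    (hsucc : ∀ i s t, s ≤ ℓ i → t ≤ ℓ (i + 1) → G.Adj (Q i s) (Q (i + 1) t) → s = ℓ i ∧ t = 0)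
    (x y : (i : Fin n) × Fin (ℓ i + 1)) :
    G.Adj (Q x.1 x.2) (Q y.1 y.2) ↔ y = blockSucc ℓ x ∨ x = blockSucc ℓ y := by
  refine ⟨fun hadj => ?_, ?_⟩
  swap
  · rintro (rfl | rfl)
    exacts [L.adj_blockSucc x, (L.adj_blockSucc y).symm]
  obtain ⟨i, s⟩ := x
  obtain ⟨j, t⟩ := y
  have hs := Nat.lt_succ_iff.mp s.isLt
  have ht := Nat.lt_succ_iff.mp t.isLt
  rcases hnear i j _ ((L.isPathSeq i).mapsTo hs) _ ((L.isPathSeq j).mapsTo ht) hadj with rfl | hij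
  · rcases lt_trichotomy (s : ℕ) t with h | h | h
    · left
      have : (t : ℕ) = s + 1 := by by_contra; exact hsame i s t (by omega) ht hadj
      rw [blockSucc_of_lt (by omega)]
      exact congrArg (Sigma.mk i) (Fin.ext this)
    · exact absurd hadj (by rw [Fin.ext h]; exact G.irrefl)
    · right
      have : (s : ℕ) = t + 1 := by by_contra; exact hsame i t s (by omega) hs hadj.symm
      rw [blockSucc_of_lt (by omega)]
      exact congrArg (Sigma.mk i) (Fin.ext this)
  · rcases (cycleGraph_adj_iff_eq_add_one hn).mp hij with rfl | rfl
    · obtain ⟨hs', ht'⟩ := hsucc i s t hs ht hadj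
      left
      rw [blockSucc_of_eq hs']
      exact congrArg (Sigma.mk (i + 1)) (Fin.ext ht')
    · obtain ⟨ht', hs'⟩ := hsucc j t s ht hs hadj.symm
      right
      rw [blockSucc_of_eq ht']
      exact congrArg (Sigma.mk (j + 1)) (Fin.ext hs')

theorem isIndContained_cycleGraph (L : G.CycleLift S ℓ Q) (hn : 2 ≤ n)
    (hS : Pairwise fun i j => Disjoint (S i) (S j))
    (hnear : ∀ i j, ∀ x ∈ S i, ∀ y ∈ S j, G.Adj x y → i = j ∨ (cycleGraph n).Adj i j)
    (hsame : ∀ i s t, s + 1 < t → t ≤ ℓ i → ¬G.Adj (Q i s) (Q i t))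
    (hsucc : ∀ i s t, s ≤ ℓ i → t ≤ ℓ (i + 1) → G.Adj (Q i s) (Q (i + 1) t) → s = ℓ i ∧ t = 0) :
    cycleGraph (∑ i, (ℓ i + 1)) ⊴ G :=
  isIndContained_cycleGraph_of_succ (by simp [Finset.sum_add_distrib]; omega) finSigmaFinEquiv
    (blockSucc ℓ) (finSigmaFinEquiv_blockSucc ℓ) _ (L.injective hS)
    (L.adj_iff_blockSucc hn hnear hsame hsucc)

theorem exists_isIndContained_cycleGraph (L : G.CycleLift S ℓ Q) (hn : 2 ≤ n)
    (hS : Pairwise fun i j => Disjoint (S i) (S j))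
    (hnear : ∀ i j, ∀ x ∈ S i, ∀ y ∈ S j, G.Adj x y → i = j ∨ (cycleGraph n).Adj i j) :
    ∃ k, n ≤ k ∧ cycleGraph k ⊴ G := by
  induction hN : ∑ j, ℓ j using Nat.strong_induction_on generalizing ℓ Q with
  | _ N ih =>
  by_cases hsame : ∀ i s t, s + 1 < t → t ≤ ℓ i → ¬G.Adj (Q i s) (Q i t)
  swap
  · simp only [not_forall, not_not] at hsame
    obtain ⟨i, s, t, hst, ht, hadj⟩ := hsame
    obtain ⟨ℓ', Q', L', hlt⟩ := L.exists_sum_lt_of_adj_same hn i hst ht hadj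
    exact ih _ (hN ▸ hlt) L' rfl
  by_cases hsucc : ∀ i s t, s ≤ ℓ i → t ≤ ℓ (i + 1) → G.Adj (Q i s) (Q (i + 1) t) →
      s = ℓ i ∧ t = 0
  swap
  · simp only [not_forall] at hsucc
    obtain ⟨i, s, t, hs, ht, hadj, hst⟩ := hsucc
    obtain ⟨ℓ', Q', L', hlt⟩ := L.exists_sum_lt_of_adj_succ hn i hs ht hadj hst
    exact ih _ (hN ▸ hlt) L' rfl
  exact ⟨_, by simp [Finset.sum_add_distrib], L.isIndContained_cycleGraph hn hS hnear hsame hsucc⟩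

end CycleLift

theorem exists_cycleLift_of_contractEdges {G : SimpleGraph V} {F : Set (Sym2 V)}
    (hF : F ⊆ G.edgeSet) {n : ℕ} [NeZero n] (c : Fin n → (fromEdgeSet F).ConnectedComponent)
    (hc : ∀ i, (contractEdges G F).Adj (c i) (c (i + 1))) :
    ∃ ℓ Q, G.CycleLift (fun i => (c i).supp) ℓ Q := by
  have hFG : fromEdgeSet F ≤ G := (fromEdgeSet_mono hF).trans (fromEdgeSet_edgeSet G).le
  choose x y hx hy hxy using fun i => (hc i).2
  have hpath i := exists_isPathSeq_of_connectedComponentMk_eq hFG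
    (by rw [hy (i - 1), sub_add_cancel] : _ = c i) (hx i)
  choose ℓ Q hQ hstart hend using hpath
  exact ⟨ℓ, Q, hQ, fun i => by simpa [hend, hstart] using hxy i⟩

end SimpleGraph

/-- If `G/F` contains a hole on `h` vertices, then `G` contains a hole
on at least `h` vertices. -/
theorem hole_in_contraction {V : Type u} (G : SimpleGraph V) (F : Set (Sym2 V))
    (hF : F ⊆ G.edgeSet) (h : ℕ) (hhole : HasHole (contractEdges G F) h) :
    ∃ k, h ≤ k ∧ HasHole G k := by
  obtain ⟨h4, s, ⟨φ⟩⟩ := hhole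
  have : NeZero h := ⟨by omega⟩
  obtain ⟨c⟩ : cycleGraph h ⊴ contractEdges G F :=
    isIndContained_iff_exists_iso_induce.mpr ⟨s, ⟨φ.symm⟩⟩
  obtain ⟨ℓ, Q, L⟩ := exists_cycleLift_of_contractEdges hF c fun i =>
    c.map_adj_iff.mpr ((cycleGraph_adj_iff_eq_add_one (by omega)).mpr (Or.inl rfl))
  obtain ⟨k, hk, hG⟩ := L.exists_isIndContained_cycleGraph (by omega)
    (fun i j hij => pairwise_disjoint_supp_connectedComponent _ (c.injective.ne hij))
    fun i j x hx y hy hxy => or_iff_not_imp_left.mpr fun hij =>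
      c.map_adj_iff.mp ⟨c.injective.ne hij, x, y, hx, hy, hxy⟩
  obtain ⟨t, ⟨ψ⟩⟩ := isIndContained_iff_exists_iso_induce.mp hG
  exact ⟨k, hk, by omega, t, ⟨ψ.symm⟩⟩
end

section
/- For every n ≥ 1, the complement of the path graph on n vertices (an antipath) is contraction perfect. -/
/-!
Choosing a representative in every contracted class maps the complement of a contraction `G/F`
injectively into the complement of `G`: two classes are nonadjacent in `G/F` only if their
representatives are nonadjacent in `G`. For an antipath `G` this complement is a path, so it
suffices that a graph `H` whose complement is a subgraph of a path is perfect. That property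
passes to induced subgraphs, and for such `H` the greedy left-to-right matching of `Hᶜ` along
the path yields a colouring of `H` whose classes are the matched pairs and the single vertices;
the vertices not matched to their predecessor form a clique of `H` with exactly as many vertices
as there are colours.
-/

open SimpleGraph

universe u

variable {V : Type u}

lemma cliqueNumber_le_chromaticNumber (G : SimpleGraph V) : cliqueNumber G ≤ G.chromaticNumber :=
  iSup₂_le fun _ ht => ht.card_le_chromaticNumber

lemma chromaticNumber_eq_cliqueNumber_of_coloring_clique {G : SimpleGraph V} {s : Finset V}
    (hs : G.IsClique (s : Set V)) (C : G.Coloring s) : G.chromaticNumber = cliqueNumber G := by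
  refine le_antisymm ?_ (cliqueNumber_le_chromaticNumber G)
  calc G.chromaticNumber ≤ Fintype.card s := C.colorable.chromaticNumber_le
    _ = s.card := by simp
    _ ≤ cliqueNumber G := le_iSup₂_of_le s hs le_rfl

/-- `greedyMatched e (t + 1)` says that `t + 1` is matched to `t` when the edges `{t, t + 1}`
of the path on `ℕ` with `e t` are matched greedily from left to right. -/
def greedyMatched (e : ℕ → Prop) : ℕ → Prop
  | 0 => False
  | t + 1 => e t ∧ ¬greedyMatched e t

lemma hasse_nat_adj {a b : ℕ} : (hasse ℕ).Adj a b ↔ a + 1 = b ∨ b + 1 = a := by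
  simp [hasse_adj]

section ComplementInPath

variable {W : Type*} {H : SimpleGraph W} (φ : Hᶜ →g hasse ℕ)

def complEdgeAt (t : ℕ) : Prop :=
  ∃ a b, φ a = t ∧ φ b = t + 1 ∧ Hᶜ.Adj a b

lemma exists_partner_of_greedyMatched (hφ : Function.Injective φ) {w : W}
    (hw : greedyMatched (complEdgeAt φ) (φ w)) :
    ∃ a, Hᶜ.Adj a w ∧ φ a + 1 = φ w ∧ ¬greedyMatched (complEdgeAt φ) (φ a) := by
  generalize ht : φ w = t at hw
  cases t with
  | zero => exact hw.elim
  | succ t =>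
    obtain ⟨⟨a, b, ha, hb, hab⟩, hunmatched⟩ := hw
    obtain rfl : b = w := hφ (hb.trans ht.symm)
    exact ⟨a, hab, by omega, ha ▸ hunmatched⟩

lemma isClique_setOf_not_greedyMatched :
    H.IsClique {w | ¬greedyMatched (complEdgeAt φ) (φ w)} := by
  intro a ha b hb hab
  by_contra hnadj
  have hcompl : Hᶜ.Adj a b := (compl_adj H a b).2 ⟨hab, hnadj⟩
  rcases hasse_nat_adj.1 (φ.map_adj hcompl) with h | h
  · exact hb (h ▸ ⟨⟨a, b, rfl, h.symm, hcompl⟩, ha⟩)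
  · exact ha (h ▸ ⟨⟨b, a, rfl, h.symm, hcompl.symm⟩, hb⟩)

theorem chromaticNumber_eq_cliqueNumber_of_injective_hom_compl [Finite W]
    (hφ : Function.Injective φ) : H.chromaticNumber = cliqueNumber H := by
  classical
  have := Fintype.ofFinite W
  set M : ℕ → Prop := greedyMatched (complEdgeAt φ)
  choose! partner hpartner using fun w (hw : M (φ w)) => exists_partner_of_greedyMatched φ hφ hw
  let U : Finset W := {w | ¬M (φ w)}
  let leader (w : W) : W := if M (φ w) then partner w else w
  have leader_mem (w : W) : leader w ∈ U := by
    by_cases hw : M (φ w)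
    · simpa [U, leader, hw] using (hpartner w hw).2.2
    · simp [U, leader, hw]
  have leader_spec (w : W) : leader w = w ∨ Hᶜ.Adj (leader w) w ∧ φ (leader w) + 1 = φ w := by
    by_cases hw : M (φ w)
    · simpa [leader, hw] using Or.inr ⟨(hpartner w hw).1, (hpartner w hw).2.1⟩
    · simp [leader, hw]
  let C : H.Coloring U := Coloring.mk (fun w => ⟨leader w, leader_mem w⟩) fun {v w} hvw heq => by
    have heq : leader v = leader w := congrArg Subtype.val heq
    rcases leader_spec v with hv | ⟨hv, hφv⟩ <;> rcases leader_spec w with hw | ⟨hw, hφw⟩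
    · exact hvw.ne (hv.symm.trans (heq.trans hw))
    · exact ((compl_adj H _ _).1 (hv ▸ heq ▸ hw)).2 hvw
    · exact ((compl_adj H _ _).1 (hw ▸ heq.symm ▸ hv)).2 hvw.symm
    · exact hvw.ne (hφ (by rw [heq] at hφv; omega))
  refine chromaticNumber_eq_cliqueNumber_of_coloring_clique ?_ C
  simpa [U] using isClique_setOf_not_greedyMatched φ

theorem isPerfect_of_injective_hom_compl [Finite W] (hφ : Function.Injective φ) :
    IsPerfect H := fun s =>
  let incl : (H.induce s)ᶜ →g Hᶜ := ⟨Subtype.val, fun h => ⟨fun e => h.1 (Subtype.ext e), h.2⟩⟩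
  chromaticNumber_eq_cliqueNumber_of_injective_hom_compl (φ.comp incl)
    (hφ.comp Subtype.val_injective)

end ComplementInPath

lemma exists_injective_hom_compl_contractEdges (G : SimpleGraph V) (F : Set (Sym2 V)) :
    ∃ ψ : (contractEdges G F)ᶜ →g Gᶜ, Function.Injective ψ := by
  refine ⟨⟨Quot.out, fun {c d} h => ⟨?_, fun hG => h.2 ⟨h.1, _, _, c.out_eq, d.out_eq, hG⟩⟩⟩, ?_⟩
  · exact fun hout => h.1 (by rw [← c.out_eq, ← d.out_eq, hout])
  · exact Function.LeftInverse.injective (g := Quot.mk _) Quot.out_eq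

def pathGraphHomHasseNat (n : ℕ) : pathGraph n →g hasse ℕ :=
  ⟨Fin.val, fun h => hasse_adj.2 (by simpa using hasse_adj.1 h)⟩

theorem antipath_contractionPerfect_general (n : ℕ) :
    IsContractionPerfect (SimpleGraph.pathGraph n)ᶜ := by
  intro F _
  obtain ⟨ψ, hψ⟩ := exists_injective_hom_compl_contractEdges (pathGraph n)ᶜ F
  let toPath : (pathGraph n)ᶜᶜ →g hasse ℕ :=
    (pathGraphHomHasseNat n).comp (Hom.ofLE (compl_compl _).le)
  exact isPerfect_of_injective_hom_compl (toPath.comp ψ) (Fin.val_injective.comp hψ)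

/-- Antipaths (complements of path graphs) are contraction perfect. -/
theorem antipath_contractionPerfect (n : ℕ) (hn : 1 ≤ n) :
    IsContractionPerfect (SimpleGraph.pathGraph n)ᶜ :=
  antipath_contractionPerfect_general n
end

section
/- For every k ≥ 3 and every simple graph G, G is k-hole-free if and only if its utter graph u(G) is k-hole-free. -/
open SimpleGraph

universe u

variable {V : Type u}

/-- A graph is `k`-hole-free if every hole of the graph has at most `k` vertices. -/
def IsKHoleFree (G : SimpleGraph V) (k : ℕ) : Prop := ∀ n, HasHole G n → n ≤ k

/-! The vertex sets of the nodes of a hole `A₀, …, A_{N-1}` of `u(G)` are cliques `S₀, …, S_{N-1}`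
of `G` (a vertex, or the two ends of an edge), and two of them touch, i.e. meet or are joined by
an edge, exactly when their indices are consecutive modulo `N`. Tag each vertex of a walk in `G`
with the index of a clique containing it; summing the signed steps `0, ±1` of the tags around a
closed walk gives a winding number, which is a multiple of `N` and at most the length of the walk.
Going once around the cliques gives a closed walk of winding number `N`. A shortest closed walk
of nonzero winding number therefore has length at least `N`, and it has no repeated vertex and no
chord: either would split it into two shorter closed walks whose winding numbers add up to its
own. So it is a hole of `G` with at least `N` vertices. Conversely `G` is an induced subgraph of
`u(G)`. -/

open Finset

theorem hasHole_iff_isIndContained (G : SimpleGraph V) (n : ℕ) :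
    HasHole G n ↔ 4 ≤ n ∧ cycleGraph n ⊴ G := by
  rw [HasHole, isIndContained_iff_exists_iso_induce]
  exact and_congr_right fun _ => exists_congr fun _ => ⟨fun ⟨e⟩ => ⟨e.symm⟩, fun ⟨e⟩ => ⟨e.symm⟩⟩

lemma Fin.val_sub_eq_one_iff {n : ℕ} (hn : 2 ≤ n) (a b : Fin n) :
    (a - b).val = 1 ↔ a.val = b.val + 1 ∨ (a.val = 0 ∧ b.val = n - 1) := by
  rcases le_or_gt b a with h | h
  · rw [Fin.coe_sub_iff_le.2 h]; omega
  · rw [Fin.coe_sub_iff_lt.2 h]; omega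

lemma cycleGraph_adj_iff_val {n : ℕ} (hn : 2 ≤ n) {a b : Fin n} :
    (cycleGraph n).Adj a b ↔ a.val = b.val + 1 ∨ b.val = a.val + 1 ∨
      (a.val = 0 ∧ b.val = n - 1) ∨ (b.val = 0 ∧ a.val = n - 1) := by
  rw [cycleGraph_adj', Fin.val_sub_eq_one_iff hn, Fin.val_sub_eq_one_iff hn]
  tauto

lemma Finset.sum_range_two_mul {M : Type*} [AddCommMonoid M] (f : ℕ → M) (m : ℕ) :
    ∑ j ∈ range (2 * m), f j = ∑ i ∈ range m, (f (2 * i) + f (2 * i + 1)) := by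
  induction m with
  | zero => simp
  | succ m ih => rw [Nat.mul_succ, sum_range_succ, sum_range_succ, sum_range_succ, ih, add_assoc]

lemma Fin.val_add_one_sub_self {n : ℕ} [NeZero n] (hn : 2 ≤ n) (a : Fin n) :
    (a + 1 - a).val = 1 := by
  rw [add_sub_cancel_left, Fin.val_one', Nat.mod_eq_of_lt hn]

section CycleStep

variable {n : ℕ}

def cycleStep (a b : Fin n) : ℤ :=
  (if (b - a).val = 1 then 1 else 0) - (if (a - b).val = 1 then 1 else 0)

lemma cycleStep_swap (a b : Fin n) : cycleStep b a = -cycleStep a b := by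
  unfold cycleStep; ring

lemma abs_cycleStep_le (a b : Fin n) : |cycleStep a b| ≤ 1 := by
  unfold cycleStep; split_ifs <;> norm_num

lemma cycleStep_self (a : Fin n) : cycleStep a a = 0 := by
  simp [cycleStep]

lemma cycleStep_eq_one (hn : 3 ≤ n) {a b : Fin n} (h : (b - a).val = 1) : cycleStep a b = 1 := by
  have h' : ¬(a - b).val = 1 := by
    have := a.isLt
    rw [Fin.val_sub_eq_one_iff (by omega)] at h ⊢; omega
  simp [cycleStep, h, h']

lemma dvd_sub_cycleStep (hn : 3 ≤ n) {a b : Fin n} (h : a = b ∨ (cycleGraph n).Adj a b) :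
    (n : ℤ) ∣ (b.val : ℤ) - a.val - cycleStep a b := by
  rcases h with rfl | h
  · simp [cycleStep_self]
  rw [cycleGraph_adj_iff_val (by omega)] at h
  have ha := a.isLt
  have hb := b.isLt
  simp only [cycleStep, Fin.val_sub_eq_one_iff (by omega : 2 ≤ n)]
  rcases h with h | h | h | h <;> split_ifs <;> first
    | exact Dvd.intro 0 (by omega) | exact Dvd.intro 1 (by omega) | exact Dvd.intro (-1) (by omega)

end CycleStep

section ClosedWalk

variable {X : Type*} {n : ℕ}

def IsClosedWalk (R : X → X → Prop) (L : ℕ) (c : ℕ → X) : Prop :=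
  (∀ i < L, R (c i) (c (i + 1))) ∧ c L = c 0

def IsCycleLabelling (R : X → X → Prop) (ℓ : X → Fin n) : Prop :=
  ∀ x y, R x y → ℓ x = ℓ y ∨ (cycleGraph n).Adj (ℓ x) (ℓ y)

def winding (ℓ : X → Fin n) (L : ℕ) (c : ℕ → X) : ℤ :=
  ∑ i ∈ range L, cycleStep (ℓ (c i)) (ℓ (c (i + 1)))

variable {R : X → X → Prop} {ℓ : X → Fin n} {L : ℕ} {c : ℕ → X}

lemma IsClosedWalk.dvd_winding (hn : 3 ≤ n) (hℓ : IsCycleLabelling R ℓ)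
    (hc : IsClosedWalk R L c) : (n : ℤ) ∣ winding ℓ L c := by
  have htel : ∑ i ∈ range L, (((ℓ (c (i + 1))).val : ℤ) - (ℓ (c i)).val) = 0 := by
    rw [sum_range_sub (fun i => ((ℓ (c i)).val : ℤ)), hc.2, sub_self]
  have hdvd : (n : ℤ) ∣ ∑ i ∈ range L,
      (((ℓ (c (i + 1))).val : ℤ) - (ℓ (c i)).val - cycleStep (ℓ (c i)) (ℓ (c (i + 1)))) :=
    dvd_sum fun i hi => dvd_sub_cycleStep hn (hℓ _ _ (hc.1 i (mem_range.1 hi)))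
  rwa [sum_sub_distrib, htel, zero_sub, dvd_neg] at hdvd

lemma abs_winding_le : |winding ℓ L c| ≤ L :=
  calc |winding ℓ L c| ≤ ∑ i ∈ range L, |cycleStep (ℓ (c i)) (ℓ (c (i + 1)))| :=
        abs_sum_le_sum_abs _ _
    _ ≤ ∑ _i ∈ range L, 1 := sum_le_sum fun i _ => abs_cycleStep_le _ _
    _ = L := by simp

lemma IsClosedWalk.le_length_of_winding_ne_zero (hn : 3 ≤ n) (hℓ : IsCycleLabelling R ℓ)
    (hc : IsClosedWalk R L c) (hW : winding ℓ L c ≠ 0) : n ≤ L := by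
  have h := Int.le_of_dvd (abs_pos.2 hW) ((dvd_abs _ _).2 (hc.dvd_winding hn hℓ))
  have := abs_winding_le (ℓ := ℓ) (L := L) (c := c)
  omega

def segmentLoop (c : ℕ → X) (a b : ℕ) (j : ℕ) : X :=
  if j ≤ b - a then c (a + j) else c a

def shortcut (c : ℕ → X) (a b : ℕ) (j : ℕ) : X :=
  if j ≤ a then c j else c (j + (b - a) - 1)

lemma isClosedWalk_segmentLoop (hc : ∀ i < L, R (c i) (c (i + 1))) {a b : ℕ} (hab : a ≤ b)
    (hbL : b ≤ L) (h : R (c b) (c a)) : IsClosedWalk R (b - a + 1) (segmentLoop c a b) := by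
  refine ⟨fun j hj => ?_, by simp [segmentLoop]⟩
  rcases Nat.lt_or_ge j (b - a) with hj' | hj'
  · simpa [segmentLoop, hj'.le, Nat.succ_le_of_lt hj', ← add_assoc] using hc (a + j) (by omega)
  · simpa [segmentLoop, show j = b - a by omega, show a + (b - a) = b by omega] using h

lemma winding_segmentLoop {a b : ℕ} (hab : a ≤ b) :
    winding ℓ (b - a + 1) (segmentLoop c a b) =
      ∑ i ∈ Ico a b, cycleStep (ℓ (c i)) (ℓ (c (i + 1))) + cycleStep (ℓ (c b)) (ℓ (c a)) := by
  rw [winding, sum_range_succ, sum_Ico_eq_sum_range]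
  congr 1
  · refine sum_congr rfl fun j hj => ?_
    have hj := mem_range.1 hj
    simp [segmentLoop, hj.le, Nat.succ_le_of_lt hj, ← add_assoc]
  · simp [segmentLoop, show a + (b - a) = b by omega]

lemma isClosedWalk_shortcut (hc : IsClosedWalk R L c) {a b : ℕ} (hab : a ≤ b) (hbL : b ≤ L)
    (h : R (c a) (c b)) : IsClosedWalk R (L - (b - a) + 1) (shortcut c a b) := by
  refine ⟨fun j hj => ?_, ?_⟩
  · rcases lt_trichotomy j a with hja | rfl | hja
    · simpa [shortcut, hja.le, Nat.succ_le_of_lt hja] using hc.1 j (by omega)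
    · simpa [shortcut, show j + 1 + (b - j) - 1 = b by omega] using h
    · simpa [shortcut, show ¬ j ≤ a by omega, show ¬ j + 1 ≤ a by omega,
        show j + 1 + (b - a) - 1 = j + (b - a) - 1 + 1 by omega] using hc.1 _ (by omega)
  · simpa [shortcut, show ¬ L - (b - a) + 1 ≤ a by omega,
      show L - (b - a) + 1 + (b - a) - 1 = L by omega] using hc.2

lemma winding_shortcut {a b : ℕ} (hab : a ≤ b) (hbL : b ≤ L) :
    winding ℓ (L - (b - a) + 1) (shortcut c a b) =
      ∑ i ∈ range a, cycleStep (ℓ (c i)) (ℓ (c (i + 1))) + cycleStep (ℓ (c a)) (ℓ (c b)) +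
        ∑ i ∈ Ico b L, cycleStep (ℓ (c i)) (ℓ (c (i + 1))) := by
  rw [winding, show L - (b - a) + 1 = a + 1 + (L - b) by omega, sum_range_add, sum_range_succ,
    sum_Ico_eq_sum_range]
  congr 2
  · refine sum_congr rfl fun j hj => ?_
    have hj := mem_range.1 hj
    simp [shortcut, hj.le, Nat.succ_le_of_lt hj]
  · simp [shortcut, show a + 1 + (b - a) - 1 = b by omega]
  · funext j
    simp [shortcut, show ¬ a + 1 + j ≤ a by omega, show ¬ a + 1 + j + 1 ≤ a by omega,
      show a + 1 + j + (b - a) - 1 = b + j by omega,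
      show a + 1 + j + 1 + (b - a) - 1 = b + j + 1 by omega]

lemma IsClosedWalk.splice (hR : ∀ x y, R x y → R y x) (hc : IsClosedWalk R L c) {a b : ℕ}
    (hab : a ≤ b) (hbL : b ≤ L) (h : R (c a) (c b)) :
    ∃ c₁ c₂ : ℕ → X, IsClosedWalk R (b - a + 1) c₁ ∧ IsClosedWalk R (L - (b - a) + 1) c₂ ∧
      winding ℓ (b - a + 1) c₁ + winding ℓ (L - (b - a) + 1) c₂ = winding ℓ L c := by
  refine ⟨segmentLoop c a b, shortcut c a b, isClosedWalk_segmentLoop hc.1 hab hbL (hR _ _ h),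
    isClosedWalk_shortcut hc hab hbL h, ?_⟩
  rw [winding_segmentLoop hab, winding_shortcut hab hbL, cycleStep_swap (ℓ (c a)), winding,
    ← sum_range_add_sum_Ico (fun i => cycleStep (ℓ (c i)) (ℓ (c (i + 1)))) hbL,
    ← sum_range_add_sum_Ico (fun i => cycleStep (ℓ (c i)) (ℓ (c (i + 1)))) hab]
  ring

theorem exists_chordless_closedWalk (hn : 3 ≤ n) (hR : ∀ x y, R x y → R y x)
    (hℓ : IsCycleLabelling R ℓ)
    (h : ∃ L c, IsClosedWalk R L c ∧ winding ℓ L c ≠ 0) :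
    ∃ L c, IsClosedWalk R L c ∧ n ≤ L ∧
      ∀ a b, a < b → b ≤ L → R (c a) (c b) → b ≤ a + 1 ∨ L ≤ b - a + 1 := by
  classical
  obtain ⟨c, hc, hW⟩ := Nat.find_spec h
  refine ⟨Nat.find h, c, hc, hc.le_length_of_winding_ne_zero hn hℓ hW, fun a b hab hbL hab' => ?_⟩
  obtain ⟨c₁, c₂, hc₁, hc₂, hsum⟩ := hc.splice (ℓ := ℓ) hR hab.le hbL hab'
  by_contra! hlt
  rcases eq_or_ne (winding ℓ (b - a + 1) c₁) 0 with h₁ | h₁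
  · exact Nat.find_min h (by omega : Nat.find h - (b - a) + 1 < Nat.find h)
      ⟨c₂, hc₂, by rw [h₁] at hsum; omega⟩
  · exact Nat.find_min h (by omega : b - a + 1 < Nat.find h) ⟨c₁, hc₁, h₁⟩

end ClosedWalk

theorem cycleGraph_isIndContained_of_chordless {G : SimpleGraph V} {L : ℕ} (hL : 4 ≤ L)
    {v : ℕ → V} (hv : IsClosedWalk (fun x y => x = y ∨ G.Adj x y) L v)
    (hchord : ∀ a b, a < b → b ≤ L → (v a = v b ∨ G.Adj (v a) (v b)) →
      b ≤ a + 1 ∨ L ≤ b - a + 1) :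
    cycleGraph L ⊴ G := by
  have hstep : ∀ i < L, v (i + 1) = v i ∨ G.Adj (v (i + 1)) (v i) := fun i hi =>
    (hv.1 i hi).imp Eq.symm G.adj_symm
  have hinj : ∀ a b, a < b → b < L → v a ≠ v b := by
    intro a b hab hbL heq
    -- a vertex repeated at cyclic distance one makes a chord of length two
    rcases hchord a b hab hbL.le (Or.inl heq) with hb | hb
    · have := hchord a (a + 2) (by omega) (by omega) (by
        rw [heq, show b = a + 1 by omega]
        exact hv.1 _ (by omega))
      omega
    · have := hchord 0 (L - 2) (by omega) (by omega) (by
        rw [show a = 0 by omega] at heq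
        rw [heq, ← show L - 2 + 1 = b by omega]
        exact hstep _ (by omega))
      omega
  have hadj : ∀ i < L, G.Adj (v i) (v (i + 1)) := by
    intro i hi
    refine (hv.1 i hi).resolve_left fun heq => ?_
    rcases Nat.lt_or_ge (i + 1) L with h | h
    · exact hinj i (i + 1) (by omega) h heq
    · exact hinj 0 i (by omega) hi (by rw [heq, show i + 1 = L by omega, hv.2])
  refine ⟨⟨⟨fun i => v i, fun i j hij => ?_⟩, fun {i j} => ?_⟩⟩
  · rcases lt_trichotomy i.val j.val with h | h | h
    · exact absurd hij (hinj _ _ h j.isLt)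
    · exact Fin.ext h
    · exact absurd hij.symm (hinj _ _ h i.isLt)
  · show G.Adj (v i) (v j) ↔ _
    rw [cycleGraph_adj_iff_val (by omega)]
    constructor
    · intro h
      rcases lt_trichotomy i.val j.val with hij | hij | hij
      · have := hchord _ _ hij j.isLt.le (Or.inr h); omega
      · exact absurd (hij ▸ h) (G.loopless.irrefl _)
      · have := hchord _ _ hij i.isLt.le (Or.inr h.symm); omega
    · have hlast := hadj (L - 1) (by omega)
      rw [show L - 1 + 1 = L by omega, hv.2] at hlast
      rintro (h | h | ⟨hi, hj⟩ | ⟨hj, hi⟩)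
      · rw [h]; exact (hadj _ (by omega)).symm
      · rw [h]; exact hadj _ i.isLt
      · rw [hi, hj]; exact hlast.symm
      · rw [hi, hj]; exact hlast

section CliqueCycle

variable {G : SimpleGraph V} {n : ℕ}

def Touches (G : SimpleGraph V) (s t : Set V) : Prop := ∃ x ∈ s, ∃ y ∈ t, x = y ∨ G.Adj x y

-- Tagging vertices with a clique index makes the label of each position of a walk well defined
-- even at vertices lying in two consecutive cliques.
def sectorRel (G : SimpleGraph V) (S : Fin n → Set V) (p q : V × Fin n) : Prop :=
  p.1 ∈ S p.2 ∧ q.1 ∈ S q.2 ∧ (p.1 = q.1 ∨ G.Adj p.1 q.1)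

lemma sectorRel_symm {S : Fin n → Set V} (p q : V × Fin n) (h : sectorRel G S p q) :
    sectorRel G S q p :=
  ⟨h.2.1, h.1, h.2.2.imp Eq.symm G.adj_symm⟩

lemma isCycleLabelling_sectorRel {S : Fin n → Set V}
    (htouch : ∀ a b, a ≠ b → Touches G (S a) (S b) → (cycleGraph n).Adj a b) :
    IsCycleLabelling (sectorRel G S) Prod.snd := fun p q h =>
  or_iff_not_imp_left.2 fun hne => htouch _ _ hne ⟨p.1, h.1, q.1, h.2.1, h.2.2⟩

open Fin.NatCast in
lemma exists_closedWalk_sectorRel_winding_eq [NeZero n] (hn : 3 ≤ n) {S : Fin n → Set V}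
    (hS : ∀ a, G.IsClique (S a)) (htouch : ∀ a, Touches G (S a) (S (a + 1))) :
    ∃ c, IsClosedWalk (sectorRel G S) (2 * n) c ∧ winding Prod.snd (2 * n) c = n := by
  choose x hx y hy hxy using htouch
  let c : ℕ → V × Fin n := fun j => if j % 2 = 0 then (x (j / 2 : ℕ), (j / 2 : ℕ))
    else (y (j / 2 : ℕ), ((j / 2 : ℕ) : Fin n) + 1)
  have heven (i : ℕ) : c (2 * i) = (x i, (i : Fin n)) := by simp [c]
  have hodd (i : ℕ) : c (2 * i + 1) = (y i, (i : Fin n) + 1) := by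
    simp [c, Nat.add_mod, show (2 * i + 1) / 2 = i by omega]
  have hnext (i : ℕ) : c (2 * i + 1 + 1) = (x ((i : Fin n) + 1), (i : Fin n) + 1) := by
    rw [show 2 * i + 1 + 1 = 2 * (i + 1) by ring, heven]; push_cast; rfl
  have hstep (i : ℕ) : sectorRel G S (c (2 * i)) (c (2 * i + 1)) ∧
      sectorRel G S (c (2 * i + 1)) (c (2 * i + 1 + 1)) := by
    rw [heven, hodd, hnext]
    exact ⟨⟨hx _, hy _, hxy _⟩, hy _, hx _, or_iff_not_imp_left.2 (hS _ (hy _) (hx _))⟩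
  refine ⟨c, ⟨fun j _ => ?_, by simp [heven, c]⟩, ?_⟩
  · obtain ⟨i, rfl | rfl⟩ := Nat.even_or_odd' j
    exacts [(hstep i).1, (hstep i).2]
  · rw [winding, Finset.sum_range_two_mul]
    have h (i : ℕ) : cycleStep (c (2 * i)).2 (c (2 * i + 1)).2 +
        cycleStep (c (2 * i + 1)).2 (c (2 * i + 1 + 1)).2 = 1 := by
      rw [heven, hodd, hnext, cycleStep_self,
        cycleStep_eq_one hn (Fin.val_add_one_sub_self (by omega) _), add_zero]
    simp [h]

theorem exists_hole_ge_of_cliqueCycle (hn : 4 ≤ n) {S : Fin n → Set V}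
    (hS : ∀ a, G.IsClique (S a))
    (htouch : ∀ a b, a ≠ b → (Touches G (S a) (S b) ↔ (cycleGraph n).Adj a b)) :
    ∃ m, n ≤ m ∧ HasHole G m := by
  have : NeZero n := ⟨by omega⟩
  have hsucc (a : Fin n) : Touches G (S a) (S (a + 1)) := by
    have h1 := Fin.val_add_one_sub_self (by omega) a
    refine (htouch a (a + 1) fun h => ?_).2 (cycleGraph_adj'.2 (Or.inr h1))
    rw [← h, sub_self, Fin.val_zero] at h1
    exact zero_ne_one h1
  obtain ⟨c₀, hc₀, hW₀⟩ := exists_closedWalk_sectorRel_winding_eq (by omega) hS hsucc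
  obtain ⟨L, c, hc, hnL, hchord⟩ := exists_chordless_closedWalk (by omega) sectorRel_symm
    (isCycleLabelling_sectorRel fun a b hab => (htouch a b hab).1) ⟨2 * n, c₀, hc₀, by omega⟩
  have hmem : ∀ i ≤ L, (c i).1 ∈ S (c i).2 := fun i hi => by
    rcases hi.lt_or_eq with hi | rfl
    · exact (hc.1 i hi).1
    · rw [hc.2]; exact (hc.1 0 (by omega)).1
  refine ⟨L, hnL, (hasHole_iff_isIndContained G L).2 ⟨by omega, ?_⟩⟩
  exact cycleGraph_isIndContained_of_chordless (v := fun i => (c i).1) (by omega)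
    ⟨fun i hi => (hc.1 i hi).2.2, by simp only [hc.2]⟩
    fun a b hab hb h => hchord a b hab hb ⟨hmem a (by omega), hmem b hb, h⟩

end CliqueCycle

section UtterGraph

variable {G : SimpleGraph V}

def utterEnds (G : SimpleGraph V) : V ⊕ G.edgeSet → Set V
  | Sum.inl x => {x}
  | Sum.inr e => {x | x ∈ (e : Sym2 V)}

lemma isClique_utterEnds (A : V ⊕ G.edgeSet) : G.IsClique (utterEnds G A) := by
  rcases A with x | ⟨e, he⟩
  · exact G.isClique_singleton x
  · induction e with
    | h u v =>
      intro x hx y hy hxy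
      simp only [utterEnds, Set.mem_ofPred_eq, Sym2.mem_iff] at hx hy
      rcases hx with rfl | rfl <;> rcases hy with rfl | rfl
      all_goals first | exact absurd rfl hxy | exact he | exact G.adj_symm he

lemma utterGraph_adj_iff_touches {A B : V ⊕ G.edgeSet} (hAB : A ≠ B) :
    (utterGraph G).Adj A B ↔ Touches G (utterEnds G A) (utterEnds G B) := by
  rcases A with x | e <;> rcases B with y | f <;>
    simp only [ne_eq, Sum.inl.injEq, Sum.inr.injEq] at hAB <;>
    simp [utterGraph, Touches, utterEnds, and_or_left, exists_or, G.adj_comm, hAB]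

def utterGraphVertexEmbedding (G : SimpleGraph V) : G ↪g utterGraph G where
  toFun := Sum.inl
  inj' := Sum.inl_injective
  map_rel_iff' := Iff.rfl

lemma HasHole.utterGraph {n : ℕ} (h : HasHole G n) : HasHole (utterGraph G) n := by
  rw [hasHole_iff_isIndContained] at h ⊢
  exact ⟨h.1, h.2.trans ⟨utterGraphVertexEmbedding G⟩⟩

theorem exists_hole_ge_of_hasHole_utterGraph {N : ℕ} (h : HasHole (utterGraph G) N) :
    ∃ m, N ≤ m ∧ HasHole G m := by
  obtain ⟨hN, ⟨f⟩⟩ := (hasHole_iff_isIndContained _ N).1 h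
  refine exists_hole_ge_of_cliqueCycle hN (S := fun a => utterEnds G (f a))
    (fun a => isClique_utterEnds _) fun a b hab => ?_
  rw [← utterGraph_adj_iff_touches (f.injective.ne hab), f.map_adj_iff]

end UtterGraph

theorem kHoleFree_iff_utter_kHoleFree_general {V : Type u} (G : SimpleGraph V) (k : ℕ) :
    IsKHoleFree G k ↔ IsKHoleFree (utterGraph G) k :=
  ⟨fun h _ hN =>
    let ⟨m, hNm, hm⟩ := exists_hole_ge_of_hasHole_utterGraph hN
    hNm.trans (h m hm),
  fun h N hN => h N hN.utterGraph⟩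

/-- For every `k ≥ 3`, a graph is `k`-hole-free iff its utter graph is
`k`-hole-free. -/
theorem kHoleFree_iff_utter_kHoleFree {V : Type u} (G : SimpleGraph V) (k : ℕ)
    (hk : 3 ≤ k) :
    IsKHoleFree G k ↔ IsKHoleFree (utterGraph G) k :=
  kHoleFree_iff_utter_kHoleFree_general G k
end

section
/- A simple graph G is a split graph if and only if its utter graph u(G) is a split graph. -/
open SimpleGraph

universe u

variable {V : Type u}

/-- A split graph: the vertex set can be partitioned into a clique and a stable set. -/
def IsSplit (G : SimpleGraph V) : Prop :=
  ∃ K S : Set V, G.IsClique K ∧ IsStableSet G S ∧ K ∪ S = Set.univ ∧ Disjoint K S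

/-! Write a split partition as a clique `K` with stable complement. Every edge of `G` then has an
endpoint in `K`, so any two distinct members of `K ∪ E(G)` contain vertices of `K` that are equal
or adjacent, which makes them adjacent in `u(G)`. Thus `K ∪ E(G)` is a clique of `u(G)` whose
complement `V(G) \ K` is stable. Conversely, `G` is an induced subgraph of `u(G)`, and being split
passes to induced subgraphs. -/

theorem isSplit_iff_exists_isClique_isStableSet_compl (G : SimpleGraph V) :
    IsSplit G ↔ ∃ K : Set V, G.IsClique K ∧ IsStableSet G Kᶜ := by
  constructor
  · rintro ⟨K, S, hK, hS, hcover, hdisj⟩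
    refine ⟨K, hK, ?_⟩
    rwa [(IsCompl.mk hdisj (codisjoint_iff.2 hcover)).compl_eq]
  · rintro ⟨K, hK, hS⟩
    exact ⟨K, Kᶜ, hK, hS, Set.union_compl_self K, disjoint_compl_right⟩

theorem IsSplit.comap {W : Type*} {G : SimpleGraph V} {H : SimpleGraph W} (f : G ↪g H)
    (hH : IsSplit H) : IsSplit G := by
  rw [isSplit_iff_exists_isClique_isStableSet_compl] at hH ⊢
  obtain ⟨K, hK, hS⟩ := hH
  exact ⟨f ⁻¹' K, fun x hx y hy hne => f.map_adj_iff.1 (hK hx hy (f.injective.ne hne)),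
    fun x hx y hy hxy => hS _ hx _ hy (f.map_adj_iff.2 hxy)⟩

theorem IsStableSet.exists_mem_of_mem_edgeSet {G : SimpleGraph V} {K : Set V}
    (hS : IsStableSet G Kᶜ) {e : Sym2 V} (he : e ∈ G.edgeSet) : ∃ x ∈ K, x ∈ e := by
  induction e using Sym2.ind with
  | _ a b =>
    by_contra h
    exact hS a (fun ha => h ⟨a, ha, Sym2.mem_mk_left a b⟩) b
      (fun hb => h ⟨b, hb, Sym2.mem_mk_right a b⟩) he

namespace utterGraph

variable (G : SimpleGraph V)

def verts : V ⊕ G.edgeSet → Set V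
  | .inl x => {x}
  | .inr e => {x | x ∈ (e : Sym2 V)}

def embedding : G ↪g utterGraph G where
  toEmbedding := .inl
  map_rel_iff' := Iff.rfl

variable {G}

theorem adj_of_mem_verts {a b : V ⊕ G.edgeSet} (hab : a ≠ b) {x y : V} (hx : x ∈ verts G a)
    (hy : y ∈ verts G b) (hxy : x = y ∨ G.Adj x y) : (utterGraph G).Adj a b := by
  rcases a with a | e <;> rcases b with b | f
  · obtain rfl : x = a := hx
    obtain rfl : y = b := hy
    exact hxy.resolve_left fun h => hab (congrArg _ h)
  · obtain rfl : x = a := hx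
    obtain rfl | hxy := hxy
    exacts [Or.inl hy, Or.inr ⟨y, hy, hxy⟩]
  · obtain rfl : y = b := hy
    obtain rfl | hxy := hxy
    exacts [Or.inl hx, Or.inr ⟨x, hx, hxy.symm⟩]
  · refine ⟨fun h => hab (congrArg _ h), ?_⟩
    obtain rfl | hxy := hxy
    exacts [Or.inl ⟨x, hx, hy⟩, Or.inr ⟨x, hx, y, hy, hxy⟩]

theorem isClique_of_forall_verts_meet {K : Set V} (hK : G.IsClique K)
    {A : Set (V ⊕ G.edgeSet)} (hA : ∀ a ∈ A, ∃ x ∈ K, x ∈ verts G a) :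
    (utterGraph G).IsClique A := by
  intro a ha b hb hab
  obtain ⟨x, hxK, hx⟩ := hA a ha
  obtain ⟨y, hyK, hy⟩ := hA b hb
  exact adj_of_mem_verts hab hx hy ((eq_or_ne x y).imp_right (hK hxK hyK))

end utterGraph

theorem IsSplit.utterGraph {G : SimpleGraph V} (hG : IsSplit G) : IsSplit (utterGraph G) := by
  rw [isSplit_iff_exists_isClique_isStableSet_compl] at hG ⊢
  obtain ⟨K, hK, hS⟩ := hG
  refine ⟨Sum.inl '' K ∪ Set.range Sum.inr, utterGraph.isClique_of_forall_verts_meet hK ?_, ?_⟩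
  · rintro _ (⟨x, hx, rfl⟩ | ⟨⟨e, he⟩, rfl⟩)
    exacts [⟨x, hx, rfl⟩, hS.exists_mem_of_mem_edgeSet he]
  · have hrest : ∀ {a : V ⊕ G.edgeSet}, a ∈ (Sum.inl '' K ∪ Set.range Sum.inr)ᶜ →
        ∃ x ∈ Kᶜ, a = .inl x := by
      rintro (x | e) ha
      · exact ⟨x, fun hx => ha (.inl ⟨x, hx, rfl⟩), rfl⟩
      · exact absurd (.inr ⟨e, rfl⟩) ha
    intro a ha b hb
    obtain ⟨x, hx, rfl⟩ := hrest ha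
    obtain ⟨y, hy, rfl⟩ := hrest hb
    exact hS x hx y hy

/-- A graph is a split graph iff its utter graph is a split graph. -/
theorem split_iff_utter_split {V : Type u} (G : SimpleGraph V) :
    IsSplit G ↔ IsSplit (utterGraph G) :=
  ⟨IsSplit.utterGraph, IsSplit.comap (utterGraph.embedding G)⟩
end

section
/- A finite simple graph G is an interval graph if and only if its utter graph u(G) is an interval graph. -/
open SimpleGraph

universe u

variable {V : Type u}

/-- An interval graph: a graph isomorphic to the intersection graph of a family of
intervals of a linear order, i.e. the vertices can be assigned intervals so that two
distinct vertices are adjacent iff their intervals intersect. -/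
def IsIntervalGraph (G : SimpleGraph V) : Prop :=
  ∃ (α : Type u) (_ : LinearOrder α) (I : V → Set α),
    (∀ x, (I x).OrdConnected) ∧
    ∀ x y : V, G.Adj x y ↔ (x ≠ y ∧ (I x ∩ I y).Nonempty)

/-! The vertices of `G` sit in `u(G)` as an induced subgraph, which gives one
direction. Conversely, two elements of `u(G)` are adjacent iff the vertex sets of `G` they
carry (a singleton or the two ends of an edge) are at distance at most one in `G`. So, given
intervals `I x` for `G`, represent an edge `xy` by `I x ∪ I y`, again an interval since
`I x` and `I y` meet. -/

theorem Set.OrdConnected.union_of_inter_nonempty {α : Type*} [LinearOrder α] {s t : Set α}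
    (hs : s.OrdConnected) (ht : t.OrdConnected) (h : (s ∩ t).Nonempty) :
    (s ∪ t).OrdConnected := by
  obtain ⟨p, hps, hpt⟩ := h
  refine Set.ordConnected_of_uIcc_subset_left (x := p) fun y hy => ?_
  rcases hy with hy | hy
  · exact (hs.uIcc_subset hps hy).trans Set.subset_union_left
  · exact (ht.uIcc_subset hpt hy).trans Set.subset_union_right

theorem IsIntervalGraph.of_embedding {W : Type u} {G : SimpleGraph V} {H : SimpleGraph W}
    (f : G ↪g H) (h : IsIntervalGraph H) : IsIntervalGraph G := by
  obtain ⟨α, inst, I, hI, hadj⟩ := h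
  exact ⟨α, inst, I ∘ f, fun x => hI (f x), fun x y => by
    rw [← f.map_adj_iff, hadj, f.injective.ne_iff, Function.comp_apply, Function.comp_apply]⟩

section IntersectionModel

variable {α : Type*} {G : SimpleGraph V} {I : V → Set α}

theorem nonempty_of_mem_support_of_intersection_model
    (hadj : ∀ x y, G.Adj x y ↔ x ≠ y ∧ (I x ∩ I y).Nonempty) {x : V} (hx : x ∈ G.support) :
    (I x).Nonempty := by
  obtain ⟨y, hxy⟩ := G.mem_support.1 hx
  exact ((hadj x y).1 hxy).2.mono Set.inter_subset_left

theorem biUnion_inter_biUnion_nonempty_iff_of_intersection_model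
    (hadj : ∀ x y, G.Adj x y ↔ x ≠ y ∧ (I x ∩ I y).Nonempty) {S T : Set V}
    (hST : S ∩ T ⊆ G.support) :
    ((⋃ x ∈ S, I x) ∩ ⋃ y ∈ T, I y).Nonempty ↔ ∃ x ∈ S, ∃ y ∈ T, x = y ∨ G.Adj x y := by
  simp_rw [Set.iUnion₂_inter, Set.inter_iUnion₂, Set.nonempty_iUnion, exists_prop]
  refine exists_congr fun x => and_congr_right fun hx => exists_congr fun y =>
    and_congr_right fun hy => ?_
  by_cases hxy : x = y
  · subst hxy
    simpa using nonempty_of_mem_support_of_intersection_model hadj (hST ⟨hx, hy⟩)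
  · simp [hadj, hxy]

end IntersectionModel

section UtterGraph

variable (G : SimpleGraph V)

def utterGraph.inlEmbedding : G ↪g utterGraph G where
  toEmbedding := Function.Embedding.inl
  map_rel_iff' := Iff.rfl

def utterSupport : V ⊕ G.edgeSet → Set V :=
  Sum.elim (fun x => {x}) (fun e => {x | x ∈ (e : Sym2 V)})

variable {G}

theorem utterGraph_adj_iff {a b : V ⊕ G.edgeSet} :
    (utterGraph G).Adj a b ↔
      a ≠ b ∧ ∃ x ∈ utterSupport G a, ∃ y ∈ utterSupport G b, x = y ∨ G.Adj x y := by
  rcases a with x | e <;> rcases b with y | f <;>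
    simp [utterGraph, utterSupport, and_or_left, exists_or]
  · exact Adj.ne
  · simp_rw [G.adj_comm y]

theorem utterSupport_inr_subset_support (e : G.edgeSet) :
    utterSupport G (.inr e) ⊆ G.support := by
  obtain ⟨e, he⟩ := e
  induction e using Sym2.ind with
  | _ x y =>
    intro z hz
    rcases Sym2.mem_iff.1 hz with rfl | rfl
    exacts [(G.mem_edgeSet.1 he).left_mem_support, (G.mem_edgeSet.1 he).right_mem_support]

theorem utterSupport_inter_subset_support {a b : V ⊕ G.edgeSet} (hab : a ≠ b) :
    utterSupport G a ∩ utterSupport G b ⊆ G.support := by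
  rintro x ⟨hxa, hxb⟩
  rcases a with y | e
  · rcases b with z | f
    · obtain rfl : y = z := (Set.mem_singleton_iff.1 hxa).symm.trans hxb
      exact absurd rfl hab
    · exact utterSupport_inr_subset_support f hxb
  · exact utterSupport_inr_subset_support e hxa

theorem IsIntervalGraph.utter (h : IsIntervalGraph G) : IsIntervalGraph (utterGraph G) := by
  obtain ⟨α, inst, I, hI, hadj⟩ := h
  refine ⟨α, inst, fun a => ⋃ x ∈ utterSupport G a, I x, ?_, fun a b => ?_⟩
  · rintro (x | ⟨e, he⟩)
    · simpa [utterSupport] using hI x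
    · induction e using Sym2.ind with
      | _ x y =>
        simpa [utterSupport, Set.iUnion_or, Set.iUnion_union_distrib] using
          (hI x).union_of_inter_nonempty (hI y) ((hadj x y).1 he).2
  · rw [utterGraph_adj_iff]
    exact and_congr_right fun hab => (biUnion_inter_biUnion_nonempty_iff_of_intersection_model hadj
      (utterSupport_inter_subset_support hab)).symm

end UtterGraph

theorem interval_iff_utter_interval_general {V : Type u} (G : SimpleGraph V) :
    IsIntervalGraph G ↔ IsIntervalGraph (utterGraph G) :=
  ⟨IsIntervalGraph.utter, IsIntervalGraph.of_embedding (utterGraph.inlEmbedding G)⟩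

/-- A finite graph is an interval graph iff its utter graph is an
interval graph. -/
theorem interval_iff_utter_interval {V : Type u} [Fintype V] (G : SimpleGraph V) :
    IsIntervalGraph G ↔ IsIntervalGraph (utterGraph G) :=
  interval_iff_utter_interval_general G
end
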